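/- Let X_J ⊂ X be measurable with μ(X_J) > 0, set μ_J := μ restricted to X_J, let ν_J ∈ M₊(Y) satisfy ν_J ≤ ν and ‖ν_J‖ = ‖μ_J‖, and let u ∈ L^∞₊(X,μ), v ∈ L^∞₊(Y,ν) be such that (u⊗v)·K ∈ Π(μ_J, ν_J). Then u(x₁)/u(x₂) ≤ exp(‖c‖_∞/ε) for μ_J-a.e. x₁, x₂ ∈ X_J. -/

import Mathlib

/-!
On `X_J` the first marginal of the plan has density `F x = ∫ k(x,y) u(x) v(y) dν(y) = 1`.
Since `exp(-cmax/ε) ≤ k ≤ 1`, `F` is squeezed between `exp(-cmax/ε) u(x) I` and `u(x) I`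
with `I = ∫ v dν`, so `exp(-cmax/ε) u(x₁) I ≤ 1 ≤ u(x₂) I` and `I` cancels
(if `I = ∞`, the left inequality forces `u(x₁) = 0`).
-/

open MeasureTheory ENNReal Filter Topology

noncomputable section

/-- `phi s = s * log s - s + 1` (note `phi 0 = 1` since `Real.log 0 = 0`);
this is the integrand of the Kullback--Leibler divergence. -/
def phi (s : ℝ) : ℝ := s * Real.log s - s + 1

open Classical in
/-- Kullback--Leibler divergence `KL(ρ|σ) ∈ [0,∞]`: `∫ phi (dρ/dσ) dσ` if `ρ ≪ σ`,
and `∞` otherwise (nonnegativity of `ρ` is automatic for measures). -/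
def KL {Z : Type*} [MeasurableSpace Z] (ρ σ : Measure Z) : ℝ≥0∞ :=
  if ρ ≪ σ then ∫⁻ z, ENNReal.ofReal (phi ((ρ.rnDeriv σ) z).toReal) ∂σ else ⊤

/-- The set `Π(μh, νh)` of transport plans with marginals `μh` and `νh`. -/
def Coupling {X Y : Type*} [MeasurableSpace X] [MeasurableSpace Y]
    (μh : Measure X) (νh : Measure Y) : Set (Measure (X × Y)) :=
  {π | π.map Prod.fst = μh ∧ π.map Prod.snd = νh}

/-- The Gibbs kernel measure `K = exp(-c/ε) ⋅ (μ ⊗ ν)`. -/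
def Kmeas {X Y : Type*} [MeasurableSpace X] [MeasurableSpace Y]
    (μ : Measure X) (ν : Measure Y) [SFinite ν] (c : X × Y → ℝ) (ε : ℝ) : Measure (X × Y) :=
  (μ.prod ν).withDensity fun p => ENNReal.ofReal (Real.exp (-c p / ε))

/-- The product density `(u ⊗ v)(x,y) = u x * v y`, as an `ℝ≥0∞`-valued density. -/
def prodDensity {X Y : Type*} (u : X → ℝ) (v : Y → ℝ) : X × Y → ℝ≥0∞ :=
  fun p => ENNReal.ofReal (u p.1 * v p.2)

/-- `L^∞₊(μ)`: measurable, a.e. nonnegative, essentially bounded functions. -/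
def LinftyPlus {Z : Type*} [MeasurableSpace Z] (μ : Measure Z) (u : Z → ℝ) : Prop :=
  Measurable u ∧ (∀ᵐ z ∂μ, 0 ≤ u z) ∧ ∃ C : ℝ, ∀ᵐ z ∂μ, u z ≤ C

theorem ENNReal.le_of_mul_le_one_le_mul {a b c : ℝ≥0∞} (ha : a * c ≤ 1) (hb : 1 ≤ b * c) :
    a ≤ b := by
  have hc0 : c ≠ 0 := by
    rintro rfl
    simp at hb
  by_cases hctop : c = ∞
  · subst hctop
    rcases eq_or_ne a 0 with rfl | ha0
    · exact zero_le
    · simp [ENNReal.mul_top ha0] at ha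
  · exact (ENNReal.mul_le_mul_iff_left hc0 hctop).1 (ha.trans hb)

theorem MeasureTheory.Measure.map_fst_withDensity_prod {X Y : Type*} [MeasurableSpace X]
    [MeasurableSpace Y] (μ : Measure X) (ν : Measure Y) [SFinite μ] [SFinite ν]
    {f : X × Y → ℝ≥0∞} (hf : Measurable f) :
    ((μ.prod ν).withDensity f).map Prod.fst = μ.withDensity fun x => ∫⁻ y, f (x, y) ∂ν := by
  ext s hs
  rw [Measure.map_apply measurable_fst hs, ← Set.prod_univ, withDensity_apply _ (hs.prod .univ),
    withDensity_apply _ hs, setLIntegral_prod _ hf.aemeasurable, Measure.restrict_univ]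

theorem MeasureTheory.ae_restrict_eq_one_of_withDensity_eq_restrict {X : Type*}
    [MeasurableSpace X] {μ : Measure X} [SigmaFinite μ] {f : X → ℝ≥0∞} (hf : AEMeasurable f μ)
    {s : Set X} (hs : MeasurableSet s) (h : μ.withDensity f = μ.restrict s) :
    ∀ᵐ x ∂μ.restrict s, f x = 1 := by
  have hf_ind : f =ᵐ[μ] s.indicator 1 :=
    (withDensity_eq_iff_of_sigmaFinite hf (aemeasurable_one.indicator hs)).1 (by
      rw [h, withDensity_indicator hs]; exact withDensity_one.symm)
  filter_upwards [ae_restrict_of_ae hf_ind, ae_restrict_mem hs] with x hx hxs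
  simp [hx, hxs]

section Gibbs

variable {X Y : Type*} [MeasurableSpace Y]

theorem measurable_prodDensity [MeasurableSpace X] {u : X → ℝ} {v : Y → ℝ} (hu : Measurable u)
    (hv : Measurable v) :
    Measurable (prodDensity u v) :=
  ((hu.comp measurable_fst).mul (hv.comp measurable_snd)).ennreal_ofReal

theorem withDensity_Kmeas [MeasurableSpace X] (μ : Measure X) (ν : Measure Y) [SFinite ν]
    {c : X × Y → ℝ} (hc : Measurable c) (ε : ℝ) {h : X × Y → ℝ≥0∞} (hh : Measurable h) :
    (Kmeas μ ν c ε).withDensity h =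
      (μ.prod ν).withDensity fun p => ENNReal.ofReal (Real.exp (-c p / ε)) * h p :=
  (withDensity_mul _ (hc.neg.div_const ε).exp.ennreal_ofReal hh).symm

variable (ν : Measure Y) {c : X × Y → ℝ} {ε : ℝ} {u : X → ℝ} (v : Y → ℝ) {x : X}

theorem lintegral_gibbs_prodDensity_le (hc0 : ∀ p, 0 ≤ c p) (hε : 0 < ε) (hx : 0 ≤ u x) :
    ∫⁻ y, ENNReal.ofReal (Real.exp (-c (x, y) / ε)) * prodDensity u v (x, y) ∂ν ≤
      ENNReal.ofReal (u x) * ∫⁻ y, ENNReal.ofReal (v y) ∂ν := by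
  rw [← lintegral_const_mul' _ _ ofReal_ne_top]
  refine lintegral_mono fun y => ?_
  have hk : Real.exp (-c (x, y) / ε) ≤ 1 :=
    Real.exp_le_one_iff.2 (div_nonpos_of_nonpos_of_nonneg (neg_nonpos.2 (hc0 _)) hε.le)
  calc ENNReal.ofReal (Real.exp (-c (x, y) / ε)) * prodDensity u v (x, y)
      ≤ 1 * prodDensity u v (x, y) := by gcongr; exact ofReal_le_one.2 hk
    _ = ENNReal.ofReal (u x) * ENNReal.ofReal (v y) := by rw [one_mul, prodDensity, ofReal_mul hx]

theorem le_lintegral_gibbs_prodDensity {cmax : ℝ} (hcmax : ∀ p, c p ≤ cmax) (hε : 0 < ε)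
    (hx : 0 ≤ u x) :
    ENNReal.ofReal (Real.exp (-cmax / ε) * u x) * ∫⁻ y, ENNReal.ofReal (v y) ∂ν ≤
      ∫⁻ y, ENNReal.ofReal (Real.exp (-c (x, y) / ε)) * prodDensity u v (x, y) ∂ν := by
  rw [← lintegral_const_mul' _ _ ofReal_ne_top]
  refine lintegral_mono fun y => ?_
  have hk : Real.exp (-cmax / ε) ≤ Real.exp (-c (x, y) / ε) :=
    Real.exp_le_exp.2 (div_le_div_of_nonneg_right (neg_le_neg (hcmax _)) hε.le)
  rw [prodDensity, ofReal_mul (Real.exp_nonneg _), ofReal_mul hx, mul_assoc]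
  gcongr

end Gibbs

theorem scaling_ratio_bound_general
    {X Y : Type*} [MeasurableSpace X] [MeasurableSpace Y]
    (μ : Measure X) (ν : Measure Y) [IsProbabilityMeasure μ] [IsProbabilityMeasure ν]
    (c : X × Y → ℝ) (hc : Measurable c) (cmax : ℝ)
    (hc0 : ∀ p, 0 ≤ c p) (hcmax : ∀ p, c p ≤ cmax)
    (ε : ℝ) (hε : 0 < ε)
    (XJ : Set X) (hXJ : MeasurableSet XJ)
    (νJ : Measure Y)
    (u : X → ℝ) (v : Y → ℝ) (hu : LinftyPlus μ u) (hv : LinftyPlus ν v)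
    (hplan : (Kmeas μ ν c ε).withDensity (prodDensity u v) ∈
      Coupling (μ.restrict XJ) νJ) :
    ∀ᵐ x₁ ∂μ.restrict XJ, ∀ᵐ x₂ ∂μ.restrict XJ,
      u x₁ ≤ Real.exp (cmax / ε) * u x₂ := by
  obtain ⟨hu_meas, hu_nonneg, -⟩ := hu
  have hρ := measurable_prodDensity hu_meas hv.1
  have hg : Measurable fun p => ENNReal.ofReal (Real.exp (-c p / ε)) * prodDensity u v p :=
    (hc.neg.div_const ε).exp.ennreal_ofReal.mul hρ
  have hmarginal : ∀ᵐ x ∂μ.restrict XJ,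
      ∫⁻ y, ENNReal.ofReal (Real.exp (-c (x, y) / ε)) * prodDensity u v (x, y) ∂ν = 1 := by
    refine ae_restrict_eq_one_of_withDensity_eq_restrict
      hg.lintegral_prod_right'.aemeasurable hXJ ?_
    rw [← Measure.map_fst_withDensity_prod μ ν hg, ← withDensity_Kmeas μ ν hc ε hρ, hplan.1]
  filter_upwards [hmarginal, ae_restrict_of_ae hu_nonneg] with x₁ h₁ hu₁
  filter_upwards [hmarginal, ae_restrict_of_ae hu_nonneg] with x₂ h₂ hu₂
  have hratio : Real.exp (-cmax / ε) * u x₁ ≤ u x₂ :=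
    (ofReal_le_ofReal_iff hu₂).1 <| ENNReal.le_of_mul_le_one_le_mul
      (h₁ ▸ le_lintegral_gibbs_prodDensity ν v hcmax hε hu₁)
      (h₂ ▸ lintegral_gibbs_prodDensity_le ν v hc0 hε hu₂)
  calc u x₁ = Real.exp (cmax / ε) * (Real.exp (-cmax / ε) * u x₁) := by
        rw [← mul_assoc, ← Real.exp_add, neg_div, add_neg_cancel, Real.exp_zero, one_mul]
    _ ≤ Real.exp (cmax / ε) * u x₂ := by gcongr

/-- Lemma 2.9 (ii): ratio bound for the `u`-scaling factor of a
cell plan: `u x₁ / u x₂ ≤ exp(‖c‖_∞/ε)` for `μ_J`-a.e. `x₁, x₂`. -/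
theorem scaling_ratio_bound
    {X Y : Type*} [MetricSpace X] [CompactSpace X] [MeasurableSpace X] [BorelSpace X]
    [MetricSpace Y] [CompactSpace Y] [MeasurableSpace Y] [BorelSpace Y]
    (μ : Measure X) (ν : Measure Y) [IsProbabilityMeasure μ] [IsProbabilityMeasure ν]
    (c : X × Y → ℝ) (hc : Measurable c) (cmax : ℝ)
    (hc0 : ∀ p, 0 ≤ c p) (hcmax : ∀ p, c p ≤ cmax)
    (ε : ℝ) (hε : 0 < ε)
    (XJ : Set X) (hXJ : MeasurableSet XJ) (hXJpos : 0 < μ XJ)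
    (νJ : Measure Y) (hνJle : νJ ≤ ν) (hνJmass : νJ Set.univ = μ XJ)
    (u : X → ℝ) (v : Y → ℝ) (hu : LinftyPlus μ u) (hv : LinftyPlus ν v)
    (hplan : (Kmeas μ ν c ε).withDensity (prodDensity u v) ∈
      Coupling (μ.restrict XJ) νJ) :
    ∀ᵐ x₁ ∂μ.restrict XJ, ∀ᵐ x₂ ∂μ.restrict XJ,
      u x₁ ≤ Real.exp (cmax / ε) * u x₂ :=
  scaling_ratio_bound_general μ ν c hc cmax hc0 hcmax ε hε XJ hXJ νJ u v hu hv hplan
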